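/- arXiv:1804.02982 — 2 statements merged into one kernel-verified Lean document; each statement's English description precedes it below -/
import Mathlib

section
/- Let Y be a real topological vector space, A ⊆ Y and k ∈ Y \ {0}. Then cl(A) − {t·k : t > 0} ⊆ A holds if and only if k ∈ −0⁺A and cl_k(A) = cl(A). -/
open Pointwise

/-- The `k`-directional closure of a set `A`. -/
def dirCl {Y : Type*} [AddCommGroup Y] [Module ℝ Y] (A : Set Y) (k : Y) : Set Y :=
  {y | ∀ l : ℝ, 0 < l → ∃ t : ℝ, 0 ≤ t ∧ t < l ∧ y - t • k ∈ A}

/-- The recession cone `0⁺A` of a set `A`. -/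
def recCone {Y : Type*} [AddCommGroup Y] [Module ℝ Y] (A : Set Y) : Set Y :=
  {u | ∀ a ∈ A, ∀ t : ℝ, 0 ≤ t → a + t • u ∈ A}

section

variable {Y : Type*} [AddCommGroup Y] [Module ℝ Y] {A B : Set Y} {k : Y}

theorem sub_posRay_subset_iff :
    B - {x : Y | ∃ t : ℝ, 0 < t ∧ x = t • k} ⊆ A ↔ ∀ y ∈ B, ∀ t : ℝ, 0 < t → y - t • k ∈ A := by
  simp only [Set.sub_subset_iff, Set.mem_ofPred_eq]
  exact forall₂_congr fun y _ => ⟨fun h t ht => h _ ⟨t, ht, rfl⟩, fun h _ ⟨t, ht, hx⟩ => hx ▸ h t ht⟩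

theorem neg_mem_recCone_of_sub_smul_mem (h : ∀ a ∈ A, ∀ t : ℝ, 0 < t → a - t • k ∈ A) :
    -k ∈ recCone A := by
  intro a ha t ht
  rcases ht.eq_or_lt with rfl | ht
  · simpa using ha
  · simpa [smul_neg, ← sub_eq_add_neg] using h a ha t ht

theorem subset_dirCl_of_sub_smul_mem (h : ∀ y ∈ B, ∀ t : ℝ, 0 < t → y - t • k ∈ A) :
    B ⊆ dirCl A k :=
  fun y hy l hl => ⟨l / 2, by positivity, by linarith, h y hy (l / 2) (by positivity)⟩

-- Step back to the nearby point `y - s • k ∈ A` with `s < t`, then walk the rest along `-k`.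
theorem sub_smul_mem_of_mem_dirCl (hrec : -k ∈ recCone A) {y : Y} (hy : y ∈ dirCl A k)
    {t : ℝ} (ht : 0 < t) : y - t • k ∈ A := by
  obtain ⟨s, -, hst, hs⟩ := hy t ht
  have := hrec _ hs (t - s) (by linarith)
  rwa [smul_neg, sub_smul, ← sub_eq_add_neg, sub_sub, add_sub_cancel] at this

theorem dirCl_subset_closure [TopologicalSpace Y] [ContinuousSub Y] [ContinuousSMul ℝ Y] :
    dirCl A k ⊆ closure A := by
  intro y hy
  have hzero : (0 : ℝ) ∈ closure {t : ℝ | y - t • k ∈ A} := by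
    refine Metric.mem_closure_iff.2 fun l hl => ?_
    obtain ⟨t, ht0, htl, ht⟩ := hy l hl
    exact ⟨t, ht, by rwa [Real.dist_eq, zero_sub, abs_neg, abs_of_nonneg ht0]⟩
  simpa using map_mem_closure (t := A) (by fun_prop : Continuous fun t : ℝ => y - t • k) hzero
    fun _ ht => ht

end

theorem closure_sub_subset_iff_general {Y : Type*} [AddCommGroup Y] [Module ℝ Y] [TopologicalSpace Y]
    [IsTopologicalAddGroup Y] [ContinuousSMul ℝ Y] (A : Set Y) (k : Y) :
    closure A - {x : Y | ∃ t : ℝ, 0 < t ∧ x = t • k} ⊆ A ↔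
      (-k ∈ recCone A ∧ dirCl A k = closure A) := by
  rw [sub_posRay_subset_iff]
  constructor
  · intro h
    exact ⟨neg_mem_recCone_of_sub_smul_mem fun a ha => h a (subset_closure ha),
      dirCl_subset_closure.antisymm (subset_dirCl_of_sub_smul_mem h)⟩
  · rintro ⟨hrec, hdir⟩ y hy t ht
    exact sub_smul_mem_of_mem_dirCl hrec (hdir ▸ hy) ht

theorem closure_sub_subset_iff {Y : Type*} [AddCommGroup Y] [Module ℝ Y] [TopologicalSpace Y]
    [IsTopologicalAddGroup Y] [ContinuousSMul ℝ Y] (A : Set Y) (k : Y) (hk : k ≠ 0) :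
    closure A - {x : Y | ∃ t : ℝ, 0 < t ∧ x = t • k} ⊆ A ↔
      (-k ∈ recCone A ∧ dirCl A k = closure A) :=
  closure_sub_subset_iff_general A k
end

section
/- Let Y be a real topological vector space, A ⊆ Y and k ∈ −0⁺A \ {0}. Then φ_{A,k} is continuous if and only if cl(A) − {t·k : t > 0} ⊆ int(A). -/
open Pointwise

/-- The Gerstewitz functional `φ_{A,k}`. -/
noncomputable def gerst {Y : Type*} [AddCommGroup Y] [Module ℝ Y]
    (A : Set Y) (k : Y) (y : Y) : EReal :=
  sInf (Real.toEReal '' {t : ℝ | y - t • k ∈ A})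

/-!
Since `-k` is a recession direction, `{t | y - t • k ∈ A}` is an up-set of `ℝ`, so `φ y ≤ c` iff
`y - s • k ∈ A` for all `s > c`, and `φ` is shifted by `-t` when `y` is moved by `-t • k`.
If `φ` is continuous, `{φ ≤ 0}` is closed and `{φ < 0}` is open, and `{φ < 0} ⊆ A ⊆ {φ ≤ 0}`;
so `cl A ⊆ {φ ≤ 0}`, which the shift by `-t • k` maps into `{φ < 0} ⊆ int A`.
Conversely, the inclusion identifies `{φ < c}` with `int A + c • k` and `{φ ≤ c}` with
`cl A + c • k`, which are open and closed, and an `EReal`-valued function whose real strict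
sublevel sets are open and whose real sublevel sets are closed is continuous.
-/

theorem EReal.continuous_of_isOpen_lt_of_isClosed_le {X : Type*} [TopologicalSpace X]
    {f : X → EReal} (hlt : ∀ c : ℝ, IsOpen {x | f x < c})
    (hle : ∀ c : ℝ, IsClosed {x | f x ≤ c}) : Continuous f := by
  refine continuous_iff_lower_upperSemicontinuous.mpr
    ⟨lowerSemicontinuous_iff_isClosed_preimage.mpr fun y => ?_,
      upperSemicontinuous_iff_isOpen_preimage.mpr fun y => ?_⟩
  · have : f ⁻¹' Set.Iic y = ⋂ (c : ℝ) (_ : y < c), {x | f x ≤ c} := by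
      ext x
      simp only [Set.mem_preimage, Set.mem_Iic, Set.mem_iInter, Set.mem_ofPred_eq]
      refine ⟨fun h c hc => h.trans hc.le, fun h => not_lt.mp fun hyx => ?_⟩
      obtain ⟨c, hyc, hcx⟩ := EReal.exists_between_coe_real hyx
      exact (h c hyc).not_gt hcx
    rw [this]
    exact isClosed_biInter fun c _ => hle c
  · have : f ⁻¹' Set.Iio y = ⋃ (c : ℝ) (_ : (c : EReal) < y), {x | f x < c} := by
      ext x
      simp only [Set.mem_preimage, Set.mem_Iio, Set.mem_iUnion, Set.mem_ofPred_eq]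
      refine ⟨fun h => ?_, fun ⟨c, hcy, hxc⟩ => hxc.trans hcy⟩
      obtain ⟨c, hxc, hcy⟩ := EReal.exists_between_coe_real h
      exact ⟨c, hcy, hxc⟩
    rw [this]
    exact isOpen_biUnion fun c _ => hlt c

section Algebraic

variable {Y : Type*} [AddCommGroup Y] [Module ℝ Y] {A : Set Y} {k y : Y}

theorem sub_smul_mem_of_le (hrec : -k ∈ recCone A) {t s : ℝ} (hts : t ≤ s)
    (h : y - t • k ∈ A) : y - s • k ∈ A := by
  have h' := hrec (y - t • k) h (s - t) (sub_nonneg.mpr hts)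
  rwa [show y - t • k + (s - t) • -k = y - s • k by module] at h'

theorem gerst_le_coe_of_mem {s : ℝ} (h : y - s • k ∈ A) : gerst A k y ≤ s :=
  sInf_le ⟨s, h, rfl⟩

theorem gerst_lt_coe_iff {c : ℝ} : gerst A k y < c ↔ ∃ s < c, y - s • k ∈ A := by
  simp only [gerst, sInf_lt_iff, Set.exists_mem_image, Set.mem_ofPred_eq, EReal.coe_lt_coe_iff]
  exact exists_congr fun s => and_comm

theorem gerst_le_coe_iff (hrec : -k ∈ recCone A) {c : ℝ} :
    gerst A k y ≤ c ↔ ∀ s > c, y - s • k ∈ A := by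
  refine ⟨fun h s hs => ?_, fun h => not_lt.mp fun hcy => ?_⟩
  · obtain ⟨r, hrs, hr⟩ := gerst_lt_coe_iff.mp (h.trans_lt (EReal.coe_lt_coe hs))
    exact sub_smul_mem_of_le hrec hrs.le hr
  · obtain ⟨s, hcs, hsy⟩ := EReal.exists_between_coe_real hcy
    exact (gerst_le_coe_of_mem (h s (EReal.coe_lt_coe_iff.mp hcs))).not_gt hsy

theorem gerst_le_zero_of_mem (h : y ∈ A) : gerst A k y ≤ 0 :=
  gerst_le_coe_of_mem (by simpa using h)

theorem mem_of_gerst_lt_zero (hrec : -k ∈ recCone A) (h : gerst A k y < 0) : y ∈ A := by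
  obtain ⟨s, hs, hy⟩ := gerst_lt_coe_iff.mp h
  simpa using sub_smul_mem_of_le hrec hs.le hy

theorem gerst_sub_smul_le (hrec : -k ∈ recCone A) {c t : ℝ} (h : gerst A k y ≤ c) :
    gerst A k (y - t • k) ≤ (c - t : ℝ) := by
  rw [gerst_le_coe_iff hrec] at h ⊢
  intro s hs
  rw [show y - t • k - s • k = y - (s + t) • k by module]
  exact h (s + t) (by linarith)

end Algebraic

section Topological

variable {Y : Type*} [AddCommGroup Y] [Module ℝ Y] [TopologicalSpace Y]
  {A : Set Y} {k : Y}

theorem gerst_lt_coe_iff_mem_interior [IsTopologicalAddGroup Y] [ContinuousSMul ℝ Y]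
    (H : ∀ a ∈ closure A, ∀ t : ℝ, 0 < t → a - t • k ∈ interior A) {y : Y} {c : ℝ} :
    gerst A k y < c ↔ y - c • k ∈ interior A := by
  refine ⟨fun h => ?_, fun h => ?_⟩
  · obtain ⟨s, hsc, hs⟩ := gerst_lt_coe_iff.mp h
    have := H (y - s • k) (subset_closure hs) (c - s) (sub_pos.mpr hsc)
    rwa [show y - s • k - (c - s) • k = y - c • k by module] at this
  · have hcont : Continuous fun s : ℝ => y - s • k := by fun_prop
    obtain ⟨s, hsc, hs⟩ :=
      (hcont.continuousAt.eventually_mem (isOpen_interior.mem_nhds h)).exists_lt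
    exact gerst_lt_coe_iff.mpr ⟨s, hsc, interior_subset hs⟩

theorem gerst_le_coe_iff_mem_closure [IsTopologicalAddGroup Y] [ContinuousSMul ℝ Y]
    (hrec : -k ∈ recCone A)
    (H : ∀ a ∈ closure A, ∀ t : ℝ, 0 < t → a - t • k ∈ interior A) {y : Y} {c : ℝ} :
    gerst A k y ≤ c ↔ y - c • k ∈ closure A := by
  rw [gerst_le_coe_iff hrec]
  refine ⟨fun h => ?_, fun h s hs => ?_⟩
  · have hcont : Continuous fun s : ℝ => y - s • k := by fun_prop
    exact mem_closure_of_tendsto ((hcont.tendsto c).mono_left nhdsWithin_le_nhds)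
      (eventually_nhdsWithin_of_forall (s := Set.Ioi c) h)
  · have := interior_subset (H (y - c • k) h (s - c) (sub_pos.mpr hs))
    rwa [show y - c • k - (s - c) • k = y - s • k by module] at this

end Topological

theorem gerst_continuous_iff_general {Y : Type*} [AddCommGroup Y] [Module ℝ Y] [TopologicalSpace Y]
    [IsTopologicalAddGroup Y] [ContinuousSMul ℝ Y] (A : Set Y) (k : Y)
    (hrec : -k ∈ recCone A) :
    Continuous (gerst A k) ↔
      closure A - {x : Y | ∃ t : ℝ, 0 < t ∧ x = t • k} ⊆ interior A := by
  constructor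
  · rintro hcont _ ⟨a, ha, _, ⟨t, ht, rfl⟩, rfl⟩
    have ha0 : gerst A k a ≤ (0 : ℝ) :=
      closure_minimal (fun _ => gerst_le_zero_of_mem) (isClosed_Iic.preimage hcont) ha
    have hlt : gerst A k (a - t • k) < 0 :=
      (gerst_sub_smul_le hrec ha0).trans_lt (EReal.coe_lt_coe (by linarith))
    exact interior_maximal (fun _ => mem_of_gerst_lt_zero hrec) (isOpen_Iio.preimage hcont) hlt
  · intro hsub
    have H : ∀ a ∈ closure A, ∀ t : ℝ, 0 < t → a - t • k ∈ interior A :=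
      fun a ha t ht => hsub (Set.sub_mem_sub ha ⟨t, ht, rfl⟩)
    refine EReal.continuous_of_isOpen_lt_of_isClosed_le (fun c => ?_) (fun c => ?_)
    · simp only [gerst_lt_coe_iff_mem_interior H]
      exact isOpen_interior.preimage (continuous_sub_right _)
    · simp only [gerst_le_coe_iff_mem_closure hrec H]
      exact isClosed_closure.preimage (continuous_sub_right _)

theorem gerst_continuous_iff {Y : Type*} [AddCommGroup Y] [Module ℝ Y] [TopologicalSpace Y]
    [IsTopologicalAddGroup Y] [ContinuousSMul ℝ Y] (A : Set Y) (k : Y)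
    (hk : k ≠ 0) (hrec : -k ∈ recCone A) :
    Continuous (gerst A k) ↔
      closure A - {x : Y | ∃ t : ℝ, 0 < t ∧ x = t • k} ⊆ interior A :=
  gerst_continuous_iff_general A k hrec
end
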